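/- If z ∈ {2, 2u, 2u²}, then for every m ≥ 1 the code R(1,m) has exactly 8^{m+1} elements. -/
import Mathlib


open Polynomial

noncomputable section

/-- The ring `R = ℤ₄[u]/(u³ − 1)`. -/
abbrev R : Type := Polynomial (ZMod 4) ⧸ Ideal.span ({Polynomial.X ^ 3 - 1} : Set (Polynomial (ZMod 4)))

/-- The image `u` of the variable in `R`. -/
def u : R := Ideal.Quotient.mk _ Polynomial.X

instance : DecidableEq R := Classical.decEq R

lemma u_pow_three : u ^ 3 = 1 := by
  have h : (Ideal.Quotient.mk (Ideal.span ({Polynomial.X ^ 3 - 1} : Set (Polynomial (ZMod 4))))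
      (Polynomial.X ^ 3 - 1) : R) = 0 :=
    Ideal.Quotient.eq_zero_iff_mem.mpr (Ideal.subset_span rfl)
  have h2 : (u ^ 3 - 1 : R) = 0 := by
    simpa [u, map_sub, map_pow] using h
  linear_combination h2

/-- The ring automorphism `σ` of `R` determined by `σ(u) = u²`. -/
def sigmaR : R →+* R :=
  Ideal.Quotient.lift _ (Polynomial.aeval (u ^ 2)).toRingHom (by
    intro p hp
    obtain ⟨q, rfl⟩ := Ideal.mem_span_singleton.mp hp
    have h6 : ((u ^ 2) ^ 3 : R) = 1 := by
      rw [← pow_mul]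
      have : (u : R) ^ (2 * 3) = (u ^ 3) ^ 2 := by ring
      rw [this, u_pow_three, one_pow]
    simp [map_mul, map_sub, map_pow, h6])

/-- The element `δ = 2 + 2u + 2u²` of `R`. -/
def δR : R := 2 + 2 * u + 2 * u ^ 2

/-- The map `ρ : Rⁿ → Rⁿ`, reversing coordinates and applying `σ` coordinatewise. -/
def ρmap (n : ℕ) (x : Fin n → R) : Fin n → R := fun i => sigmaR (x (Fin.rev i))

/-- The 4-letter DNA alphabet. -/
inductive DNA : Type
  | A | C | G | T
deriving DecidableEq, Inhabited, Repr

/-- Watson–Crick complement of a DNA nucleotide. -/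
def DNA.compl : DNA → DNA
  | .A => .T
  | .T => .A
  | .C => .G
  | .G => .C

/-- Complement of a DNA string. -/
def complStr (s : List DNA) : List DNA := s.map DNA.compl

/-- Reverse of a DNA string. -/
def revStr (s : List DNA) : List DNA := s.reverse

/-- Reverse-complement of a DNA string. -/
def rcStr (s : List DNA) : List DNA := s.reverse.map DNA.compl

/-- Hamming distance between two DNA strings (of equal length). -/
def dH (s t : List DNA) : ℕ := ((s.zip t).filter fun p => p.1 ≠ p.2).length

/-- GC-content of a DNA string: the number of positions carrying `G` or `C`. -/
def gcContent (s : List DNA) : ℕ := (s.filter fun d => d = DNA.G ∨ d = DNA.C).length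

/-- A DNA string has no homopolymer run of length greater than `2` iff it has no three
consecutive equal symbols. -/
def NoHomopolymer3 (s : List DNA) : Prop := ¬ ∃ (l r : List DNA) (a : DNA), s = l ++ [a, a, a] ++ r

/-- Blockwise extension of a map `ψ : R → Σ³` to vectors over `R`, by concatenation. -/
def Ψ (ψ : R → List DNA) {n : ℕ} (x : Fin n → R) : List DNA := (List.ofFn x).flatMap ψ

/-- The map `ψ₂` from the ideal `2R` to DNA strings of length `3`
(the restriction of the DNA map of Table I to `2R`; its value outside `2R` is irrelevant). -/
def ψ₂ (x : R) : List DNA :=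
  if x = 0 then [.G, .A, .G]
  else if x = 2 then [.C, .G, .A]
  else if x = 2 * u then [.G, .T, .G]
  else if x = 2 * u ^ 2 then [.A, .G, .C]
  else if x = 2 + 2 * u then [.T, .C, .G]
  else if x = 2 + 2 * u ^ 2 then [.C, .A, .C]
  else if x = 2 * u + 2 * u ^ 2 then [.G, .C, .T]
  else [.C, .T, .C]

/-- The rows of the Reed–Muller type generator matrix `G_{1,m}` over `R` (with parameter `z`):
`Gmat z m i j` is the entry of `G_{1,m}` in row `i` and column `j`.  Here `G_{1,0} = [z]` and
`G_{1,m+1} = [[G_{1,m}, G_{1,m}], [0 … 0, z … z]]`, which for `m = 1` gives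
`G_{1,1} = [[z,z],[0,z]]`. -/
def Gmat (z : R) : (m : ℕ) → Fin (m + 1) → Fin (2 ^ m) → R
  | 0, _, _ => z
  | m + 1, i, j =>
    if hi : (i : ℕ) < m + 1 then
      Gmat z m ⟨i, hi⟩ ⟨(j : ℕ) % 2 ^ m, Nat.mod_lt _ (Nat.two_pow_pos m)⟩
    else if (j : ℕ) < 2 ^ m then 0 else z

/-- The Reed–Muller type code `R(1,m)`: the `R`-submodule of `R^{2^m}` generated by the rows
of `G_{1,m}`. -/
def RM (z : R) (m : ℕ) : Submodule R (Fin (2 ^ m) → R) := Submodule.span R (Set.range (Gmat z m))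

/-- Hamming weight of a vector over `R`. -/
def wt {N : ℕ} (c : Fin N → R) : ℕ := (Finset.univ.filter fun j => c j ≠ 0).card

/-- Hamming distance between two vectors over `R`. -/
def hdistR {N : ℕ} (c c' : Fin N → R) : ℕ := (Finset.univ.filter fun j => c j ≠ c' j).card

/-- Coordinate reversal of a vector over `R`. -/
def revVec {N : ℕ} (c : Fin N → R) : Fin N → R := fun j => c (Fin.rev j)

/-- `a + bu + cu²` as an element of `R`, for `a, b, c ∈ ℤ₄`. -/
def toR (a b c : ZMod 4) : R :=
  algebraMap (ZMod 4) R a + algebraMap (ZMod 4) R b * u + algebraMap (ZMod 4) R c * u ^ 2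

end

section AuxStmt15

open Polynomial

lemma equivR : Nonempty (R ≃ₗ[ZMod 4] (Fin 3 → ZMod 4)) := by
  have hmon : (X ^ 3 - 1 : (ZMod 4)[X]).Monic := by
    simpa using Polynomial.monic_X_pow_sub_C (1 : ZMod 4) (by norm_num)
  let pb : PowerBasis (ZMod 4) (AdjoinRoot (X ^ 3 - 1 : (ZMod 4)[X])) :=
    AdjoinRoot.powerBasis' hmon
  haveI : Nontrivial (ZMod 4) := ⟨0, 1, by decide⟩
  have hdim : pb.dim = 3 := by
    show (X ^ 3 - 1 : (ZMod 4)[X]).natDegree = 3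
    simpa using Polynomial.natDegree_X_pow_sub_C (n := 3) (r := (1 : ZMod 4))
  exact ⟨(pb.basis.reindex (finCongr hdim)).equivFun⟩

lemma card_range_mul_two : Nat.card (Set.range fun a : R => a * 2) = 8 := by
  obtain ⟨e⟩ := equivR
  have hcardR : Nat.card R = 64 := by
    rw [Nat.card_congr e.toEquiv, Nat.card_eq_fintype_card]
    simp [ZMod.card]
  set f : R →+ R := AddMonoidHom.mulRight (2 : R) with hf
  have hker : Nat.card f.ker = 8 := by
    have hiff : ∀ x : R, x ∈ f.ker ↔ ∀ i, e x i + e x i = 0 := by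
      intro x
      rw [AddMonoidHom.mem_ker]
      have h1 : f x = x + x := by simp [hf, mul_two]
      rw [h1, ← map_eq_zero_iff e e.injective, map_add, funext_iff]
      simp
    have : Nat.card f.ker = Nat.card {v : Fin 3 → ZMod 4 // ∀ i, v i + v i = 0} := by
      refine Nat.card_congr ?_
      refine (Equiv.subtypeEquivRight hiff).trans ?_
      exact e.toEquiv.subtypeEquiv fun x => Iff.rfl
    rw [this, Nat.card_eq_fintype_card]
    decide
  have hq := AddSubgroup.card_eq_card_quotient_mul_card_addSubgroup f.ker
  have hrange : Nat.card f.range = Nat.card (R ⧸ f.ker) :=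
    Nat.card_congr (QuotientAddGroup.quotientKerEquivRange f).toEquiv.symm
  have hset : Nat.card (Set.range fun a : R => a * 2) = Nat.card f.range := by
    refine Nat.card_congr (Equiv.subtypeEquivRight fun x => ?_)
    simp [hf, AddMonoidHom.mem_range, eq_comm]
  rw [hset, hrange]
  rw [hcardR, hker] at hq
  omega

lemma range_mul_unit (x w w' : R) (h : w * w' = 1) :
    (Set.range fun a : R => a * (x * w)) = Set.range fun a : R => a * x := by
  ext b
  constructor
  · rintro ⟨a, rfl⟩; exact ⟨a * w, by ring⟩
  · rintro ⟨a, rfl⟩; exact ⟨a * w', by linear_combination (a * x) * h⟩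

noncomputable def Dlin (m : ℕ) : (Fin (2 ^ m) → R) →ₗ[R] (Fin (2 ^ (m + 1)) → R) :=
  LinearMap.funLeft R R fun j => ⟨(j : ℕ) % 2 ^ m, Nat.mod_lt _ (Nat.two_pow_pos m)⟩

noncomputable def rrow (z : R) (m : ℕ) : Fin (2 ^ (m + 1)) → R := fun j => if (j : ℕ) < 2 ^ m then 0 else z

lemma range_Gmat_succ (z : R) (m : ℕ) :
    Set.range (Gmat z (m + 1)) = Dlin m '' Set.range (Gmat z m) ∪ {rrow z m} := by
  ext v
  simp only [Set.mem_union, Set.mem_image, Set.mem_range, Set.mem_singleton_iff]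
  constructor
  · rintro ⟨i, rfl⟩
    by_cases hi : (i : ℕ) < m + 1
    · left
      exact ⟨Gmat z m ⟨i, hi⟩, ⟨_, rfl⟩, by
        funext j; simp [Gmat, hi, Dlin, LinearMap.funLeft]⟩
    · right
      funext j; simp [Gmat, hi, rrow]
  · rintro (⟨x, ⟨i, rfl⟩, rfl⟩ | rfl)
    · refine ⟨i.castSucc, ?_⟩
      funext j
      simp [Gmat, Dlin, LinearMap.funLeft, i.is_lt]
    · refine ⟨Fin.last (m + 1), ?_⟩
      funext j
      simp [Gmat, rrow]

lemma RM_succ (z : R) (m : ℕ) :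
    RM z (m + 1) = (RM z m).map (Dlin m) ⊔ (Submodule.span R {rrow z m}) := by
  rw [RM, range_Gmat_succ, Submodule.span_union, Submodule.span_image]
  rfl

lemma mem_RM_succ {z : R} {m : ℕ} {c : Fin (2 ^ (m + 1)) → R} :
    c ∈ RM z (m + 1) ↔ ∃ x ∈ RM z m, ∃ a : R, c = Dlin m x + a • rrow z m := by
  rw [RM_succ, Submodule.mem_sup]
  constructor
  · rintro ⟨y, hy, w, hw, rfl⟩
    obtain ⟨x, hx, rfl⟩ := Submodule.mem_map.mp hy
    obtain ⟨a, rfl⟩ := Submodule.mem_span_singleton.mp hw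
    exact ⟨x, hx, a, rfl⟩
  · rintro ⟨x, hx, a, rfl⟩
    exact ⟨Dlin m x, Submodule.mem_map_of_mem hx, a • rrow z m,
      Submodule.smul_mem _ a (Submodule.mem_span_singleton_self _), rfl⟩

lemma card_RM_zero (z : R) :
    Nat.card (RM z 0) = Nat.card (Set.range fun a : R => a * z) := by
  refine (Nat.card_congr (Equiv.ofBijective
    (fun t : (Set.range fun a : R => a * z) =>
      (⟨fun _ => t.1, by
        obtain ⟨a, ha⟩ := t.2
        have h : (fun _ => t.1 : Fin (2 ^ 0) → R) = a • Gmat z 0 0 := by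
          funext j; simp [Gmat, ← ha]
        exact h ▸ Submodule.smul_mem _ a (Submodule.subset_span ⟨0, rfl⟩)⟩ : RM z 0)) ?_)).symm
  constructor
  · intro t t' h
    exact Subtype.ext (congrFun (congrArg Subtype.val h) 0)
  · rintro ⟨c, hc⟩
    have hr : Set.range (Gmat z 0) = {fun _ => z} := by
      ext v
      constructor
      · rintro ⟨i, rfl⟩; exact funext fun j => rfl
      · rintro h; exact ⟨0, (funext fun j => rfl).trans h.symm⟩
    rw [RM, hr] at hc
    obtain ⟨a, ha⟩ := Submodule.mem_span_singleton.mp hc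
    refine ⟨⟨a * z, ⟨a, rfl⟩⟩, Subtype.ext ?_⟩
    funext j
    have := congrFun ha j
    simp only [Pi.smul_apply, smul_eq_mul] at this
    exact this

lemma card_RM_succ (z : R) (m : ℕ) :
    Nat.card (RM z (m + 1)) = Nat.card (RM z m) * Nat.card (Set.range fun a : R => a * z) := by
  have h1 : (2 : ℕ) ^ m < 2 ^ (m + 1) := Nat.pow_lt_pow_right (by norm_num) (Nat.lt_succ_self m)
  have hlt : ∀ j : Fin (2 ^ m), (j : ℕ) < 2 ^ (m + 1) := fun j => lt_trans j.is_lt h1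
  rw [← Nat.card_prod]
  refine Nat.card_congr (Equiv.ofBijective
    (fun p : (RM z m) × (Set.range fun a : R => a * z) =>
      (⟨(fun j => Dlin m p.1.1 j + if (j : ℕ) < 2 ^ m then 0 else p.2.1), by
        obtain ⟨a, ha⟩ := p.2.2
        refine mem_RM_succ.mpr ⟨p.1.1, p.1.2, a, ?_⟩
        funext j
        simp only [Pi.add_apply, Pi.smul_apply, smul_eq_mul, rrow, mul_ite, mul_zero, ha]⟩ :
        RM z (m + 1))) ?_).symm
  constructor
  · rintro ⟨⟨x, hx⟩, ⟨t, ht⟩⟩ ⟨⟨x', hx'⟩, ⟨t', ht'⟩⟩ h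
    have h' := congrArg Subtype.val h
    have hx0 : x = x' := by
      funext j
      have := congrFun h' ⟨(j : ℕ), hlt j⟩
      simpa [Dlin, LinearMap.funLeft, Nat.mod_eq_of_lt j.is_lt, j.is_lt] using this
    have ht0 : t = t' := by
      have := congrFun h' ⟨2 ^ m, h1⟩
      simp only [Dlin, LinearMap.funLeft, LinearMap.coe_mk, AddHom.coe_mk, hx0,
        lt_self_iff_false, if_false] at this
      exact add_left_cancel this
    simp [hx0, ht0]
  · rintro ⟨c, hc⟩
    obtain ⟨x, hx, a, rfl⟩ := mem_RM_succ.mp hc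
    refine ⟨⟨⟨x, hx⟩, ⟨a * z, ⟨a, rfl⟩⟩⟩, Subtype.ext ?_⟩
    funext j
    simp only [Pi.add_apply, Pi.smul_apply, smul_eq_mul, rrow, mul_ite, mul_zero]

end AuxStmt15

/-- If `z ∈ {2, 2u, 2u²}`, then for every `m ≥ 1` the code `R(1,m)` has exactly `8^{m+1}`
elements. -/

theorem stmt15 (z : R) (hz : z ∈ ({2, 2 * u, 2 * u ^ 2} : Set R)) (m : ℕ) (hm : 1 ≤ m) :
    Nat.card (RM z m) = 8 ^ (m + 1) := by
  have hZ : Nat.card (Set.range fun a : R => a * z) = 8 := by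
    have hu3 : u * u ^ 2 = 1 := by rw [← pow_succ']; exact u_pow_three
    have hu3' : u ^ 2 * u = 1 := by rw [← pow_succ]; exact u_pow_three
    simp only [Set.mem_insert_iff, Set.mem_singleton_iff] at hz
    rcases hz with rfl | rfl | rfl
    · exact card_range_mul_two
    · rw [range_mul_unit 2 u (u ^ 2) hu3]; exact card_range_mul_two
    · rw [range_mul_unit 2 (u ^ 2) u hu3']; exact card_range_mul_two
  have key : ∀ k, Nat.card (RM z k) = 8 ^ (k + 1) := by
    intro k
    induction k with
    | zero => rw [card_RM_zero, hZ, pow_one]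
    | succ n ih => rw [card_RM_succ, ih, hZ, ← pow_succ]
  exact key m
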